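/- arXiv:1708.03283 — 2 statements merged into one kernel-verified Lean document; each statement's English description precedes it below -/
import Mathlib

section
/- Let a and b be odd positive integers with a < b and b - a ≡ 2 (mod 4), and set β_1 = a/2 and β_2 = b/2. Let A be the 4×4 real symmetric tridiagonal matrix with zero diagonal and off-diagonal entries A_{1,2} = A_{3,4} = √(β_1 β_2) and A_{2,3} = β_2 - β_1. Then the eigenvalues of A are -β_2, -β_1, β_1, β_2, and A admits perfect state transfer from vertex 1 to vertex 4 at time π, i.e., |(e^{iπA})_{1,4}| = 1. -/
/-!
Write `β₁ = p²` and `β₂ = q²`. The columns of `pathFourEigenvectors p q` are mutually orthogonal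
eigenvectors of the path matrix, for the eigenvalues `β₂, β₁, -β₁, -β₂`, each of squared length
`2(β₁ + β₂)`. Diagonalising gives `(e^{itA})₁₄ = i (β₁ sin tβ₂ - β₂ sin tβ₁) / (β₁ + β₂)`.
At `t = π` both sines are `±1`, since `β₁, β₂` are halves of odd integers, and `b - a ≡ 2 (mod 4)`
makes the two signs opposite, so the entry is `±i`.
-/

open Matrix Polynomial

/-- `|(e^{itH})_{j,k}|` for a real symmetric Hamiltonian `H`. -/
noncomputable def transferAmp (n : ℕ) (H : Matrix (Fin n) (Fin n) ℝ) (t : ℝ) (j k : Fin n) : ℝ :=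
  ‖NormedSpace.exp ((Complex.I * (t : ℂ)) • H.map (fun x => (x : ℂ))) j k‖

open Real

section PathFour

variable {R : Type*} [CommRing R]

def pathFour (p q : R) : Matrix (Fin 4) (Fin 4) R :=
  !![0, p * q, 0, 0; p * q, 0, q ^ 2 - p ^ 2, 0; 0, q ^ 2 - p ^ 2, 0, p * q; 0, 0, p * q, 0]

def pathFourEigenvectors (p q : R) : Matrix (Fin 4) (Fin 4) R :=
  !![p, q, q, p; q, p, -p, -q; q, -p, -p, q; p, -q, q, -p]

theorem charpoly_pathFour (p q : R) :
    (pathFour p q).charpoly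
      = (X + C (q ^ 2)) * (X + C (p ^ 2)) * (X - C (p ^ 2)) * (X - C (q ^ 2)) := by
  have hcharmatrix : charmatrix (pathFour p q) = !![X, -C (p * q), 0, 0;
      -C (p * q), X, -C (q ^ 2 - p ^ 2), 0; 0, -C (q ^ 2 - p ^ 2), X, -C (p * q);
      0, 0, -C (p * q), X] := by
    ext i j
    fin_cases i <;> fin_cases j <;> simp [pathFour]
  rw [Matrix.charpoly, hcharmatrix]
  simp [Matrix.det_succ_row_zero, Fin.sum_univ_succ, Fin.succAbove]
  ring

theorem pathFourEigenvectors_mul_self (p q : R) :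
    pathFourEigenvectors p q * pathFourEigenvectors p q = (2 * (p ^ 2 + q ^ 2)) • 1 := by
  ext i j
  fin_cases i <;> fin_cases j <;>
    simp [pathFourEigenvectors, Matrix.mul_apply, Fin.sum_univ_four] <;> ring

theorem pathFour_mul_pathFourEigenvectors (p q : R) :
    pathFour p q * pathFourEigenvectors p q
      = pathFourEigenvectors p q * diagonal ![q ^ 2, p ^ 2, -p ^ 2, -q ^ 2] := by
  ext i j
  fin_cases i <;> fin_cases j <;>
    simp [pathFour, pathFourEigenvectors, Matrix.mul_apply, Fin.sum_univ_four] <;> ring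

theorem pathFour_map {S : Type*} [CommRing S] (f : R →+* S) (p q : R) :
    (pathFour p q).map f = pathFour (f p) (f q) := by
  ext i j
  fin_cases i <;> fin_cases j <;> simp [pathFour]

end PathFour

theorem exp_smul_pathFour_apply_zero_three (z p q : ℂ) (h : p ^ 2 + q ^ 2 ≠ 0) :
    NormedSpace.exp (z • pathFour p q) 0 3
      = (p ^ 2 * Complex.sinh (z * q ^ 2) - q ^ 2 * Complex.sinh (z * p ^ 2))
        / (p ^ 2 + q ^ 2) := by
  set P := pathFourEigenvectors p q
  have hPinv : P * ((2 * (p ^ 2 + q ^ 2))⁻¹ • P) = 1 := by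
    rw [Matrix.mul_smul, pathFourEigenvectors_mul_self, smul_smul,
      inv_mul_cancel₀ (mul_ne_zero two_ne_zero h), one_smul]
  have hdet : IsUnit P.det := Matrix.isUnit_det_of_right_inverse hPinv
  have hdiag : z • pathFour p q = P * diagonal (z • ![q ^ 2, p ^ 2, -p ^ 2, -q ^ 2]) * P⁻¹ := by
    rw [diagonal_smul, Matrix.mul_smul, ← pathFour_mul_pathFourEigenvectors, ← Matrix.smul_mul,
      Matrix.mul_nonsing_inv_cancel_right _ _ hdet]
  rw [hdiag, Matrix.exp_conj _ _ ((Matrix.isUnit_iff_isUnit_det _).mpr hdet), Matrix.exp_diagonal,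
    Pi.exp_def, ← Complex.exp_eq_exp_ℂ, Matrix.inv_eq_right_inv hPinv]
  simp [P, pathFourEigenvectors, Matrix.mul_apply, Fin.sum_univ_four, Matrix.vecMul_diagonal,
    Complex.sinh]
  field_simp
  ring

theorem transferAmp_pathFour (p q t : ℝ) (h : p ^ 2 + q ^ 2 ≠ 0) :
    transferAmp 4 (pathFour p q) t 0 3
      = |(p ^ 2 * sin (t * q ^ 2) - q ^ 2 * sin (t * p ^ 2)) / (p ^ 2 + q ^ 2)| := by
  have hsinh (x : ℝ) : Complex.sinh (Complex.I * t * (x : ℂ)) = sin (t * x) * Complex.I := by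
    rw [show Complex.I * t * x = ((t * x : ℝ) : ℂ) * Complex.I by push_cast; ring,
      Complex.sinh_mul_I, Complex.ofReal_sin]
  have hentry : NormedSpace.exp ((Complex.I * t) • pathFour (p : ℂ) q) 0 3
      = (((p ^ 2 * sin (t * q ^ 2) - q ^ 2 * sin (t * p ^ 2)) / (p ^ 2 + q ^ 2) : ℝ) : ℂ)
        * Complex.I := by
    rw [exp_smul_pathFour_apply_zero_three _ _ _ (by exact_mod_cast h)]
    simp only [← Complex.ofReal_pow, hsinh]
    push_cast
    ring
  rw [transferAmp, show (fun x : ℝ => (x : ℂ)) = Complex.ofRealHom from rfl, pathFour_map,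
    Complex.ofRealHom_eq_coe, Complex.ofRealHom_eq_coe, hentry, norm_mul, Complex.norm_I, mul_one,
    Complex.norm_real, norm_eq_abs]

theorem abs_sin_pi_mul_half_of_odd {a : ℤ} (ha : Odd a) : |sin (π * (a / 2))| = 1 := by
  obtain ⟨k, rfl⟩ := ha
  rw [show π * (((2 * k + 1 : ℤ) : ℝ) / 2) = π / 2 + k * π by push_cast; ring,
    sin_add_int_mul_pi, sin_pi_div_two, mul_one, abs_zpow, abs_neg, abs_one, _root_.one_zpow]

theorem sin_pi_mul_half_eq_neg_of_sub_emod_four {a b : ℤ} (h : (b - a) % 4 = 2) :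
    sin (π * (b / 2)) = -sin (π * (a / 2)) := by
  have hb : b = a + 2 + 4 * ((b - a) / 4) := by omega
  rw [hb, show π * (((a + 2 + 4 * ((b - a) / 4) : ℤ) : ℝ) / 2)
      = π * (a / 2) + π + ((b - a) / 4 : ℤ) * (2 * π) by push_cast; ring,
    sin_add_int_mul_two_pi, sin_add_pi]

theorem pst_path_four_general (a b : ℤ) (ha : Odd a) (hapos : 0 < a) (hbpos : 0 < b)
    (hmod : (b - a) % 4 = 2) (β₁ β₂ : ℝ)
    (hβ₁ : β₁ = (a : ℝ) / 2) (hβ₂ : β₂ = (b : ℝ) / 2)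
    (A : Matrix (Fin 4) (Fin 4) ℝ)
    (hA : A = !![0, Real.sqrt (β₁ * β₂), 0, 0;
                 Real.sqrt (β₁ * β₂), 0, β₂ - β₁, 0;
                 0, β₂ - β₁, 0, Real.sqrt (β₁ * β₂);
                 0, 0, Real.sqrt (β₁ * β₂), 0]) :
    A.charpoly = (X + C β₂) * (X + C β₁) * (X - C β₁) * (X - C β₂) ∧
      transferAmp 4 A Real.pi 0 3 = 1 := by
  have hβ₁pos : 0 < β₁ := by rw [hβ₁]; positivity
  have hβ₂pos : 0 < β₂ := by rw [hβ₂]; positivity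
  have hA' : A = pathFour √β₁ √β₂ := by
    rw [hA, pathFour, sq_sqrt hβ₁pos.le, sq_sqrt hβ₂pos.le, sqrt_mul hβ₁pos.le]
  refine ⟨?_, ?_⟩
  · rw [hA', charpoly_pathFour, sq_sqrt hβ₁pos.le, sq_sqrt hβ₂pos.le]
  · have hden : (a : ℝ) / 2 + b / 2 ≠ 0 := by positivity
    rw [hA', transferAmp_pathFour _ _ _ (by positivity), sq_sqrt hβ₁pos.le, sq_sqrt hβ₂pos.le,
      hβ₁, hβ₂, sin_pi_mul_half_eq_neg_of_sub_emod_four hmod, ← abs_sin_pi_mul_half_of_odd ha,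
      ← abs_neg (sin _)]
    congr 1
    field_simp
    ring

/-- For odd positive integers `a < b` with `b - a ≡ 2 (mod 4)`, setting `β₁ = a/2`,
`β₂ = b/2`, the weighted path on 4 vertices with edge weights
`√(β₁β₂), β₂ - β₁, √(β₁β₂)` has eigenvalues `-β₂, -β₁, β₁, β₂` and admits PST
from vertex 1 to vertex 4 at time `π`. -/
theorem pst_path_four (a b : ℤ) (ha : Odd a) (hb : Odd b) (hapos : 0 < a) (hbpos : 0 < b)
    (hab : a < b) (hmod : (b - a) % 4 = 2) (β₁ β₂ : ℝ)
    (hβ₁ : β₁ = (a : ℝ) / 2) (hβ₂ : β₂ = (b : ℝ) / 2)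
    (A : Matrix (Fin 4) (Fin 4) ℝ)
    (hA : A = !![0, Real.sqrt (β₁ * β₂), 0, 0;
                 Real.sqrt (β₁ * β₂), 0, β₂ - β₁, 0;
                 0, β₂ - β₁, 0, Real.sqrt (β₁ * β₂);
                 0, 0, Real.sqrt (β₁ * β₂), 0]) :
    A.charpoly = (X + C β₂) * (X + C β₁) * (X - C β₁) * (X - C β₂) ∧
      transferAmp 4 A Real.pi 0 3 = 1 :=
  pst_path_four_general a b ha hapos hbpos hmod β₁ β₂ hβ₁ hβ₂ A hA
end

section
/- Let β_1 be an odd positive integer and β_2 an even positive integer with β_1 < β_2. Let A be the 5×5 real symmetric tridiagonal matrix with zero diagonal and off-diagonal entries A_{1,2} = A_{4,5} = β_1 and A_{2,3} = A_{3,4} = √((β_2² - β_1²)/2). Then the eigenvalues of A are -β_2, -β_1, 0, β_1, β_2, and A admits perfect state transfer from vertex 1 to vertex 5 at time π, i.e., |(e^{iπA})_{1,5}| = 1. -/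
/-!
The path is diagonalised by an explicit orthogonal matrix `Q`: `A = Q D Qᵀ` with
`D = diag(-β₂, -β₁, 0, β₁, β₂)`, whose columns are alternately mirror-symmetric and
mirror-antisymmetric. As the eigenvalues are integers of alternating parity,
`e^{iπA} = Q diag(1, -1, 1, -1, 1) Qᵀ`, and the alternation of symmetries turns this into the
reversal permutation matrix, so `e^{iπA}` maps vertex `1` to vertex `5` exactly.
-/

open Matrix Polynomial

theorem Complex.exp_I_mul_pi_mul_intCast (k : ℤ) :
    Complex.exp (Complex.I * Real.pi * k) = (-1) ^ k := by
  rw [mul_comm, Complex.exp_int_mul, mul_comm, Complex.exp_pi_mul_I]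

namespace Matrix

variable {n : Type*} [Fintype n] [DecidableEq n]

theorem charpoly_mul_mul_transpose {R : Type*} [CommRing R] {Q : Matrix n n R}
    (hQ : Q * Qᵀ = 1) (D : Matrix n n R) : (Q * D * Qᵀ).charpoly = D.charpoly := by
  rw [charpoly_mul_comm, ← Matrix.mul_assoc, mul_eq_one_comm.mp hQ, Matrix.one_mul]

theorem mul_diagonal_mul_transpose_eq_permMatrix {R : Type*} [CommRing R] {Q : Matrix n n R}
    (hQ : Q * Qᵀ = 1) {s : n → R} {σ : Equiv.Perm n} (hσ : Q.submatrix σ id = Q * diagonal s) :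
    Q * diagonal s * Qᵀ = σ.permMatrix R := by
  rw [← hσ, ← PEquiv.toMatrix_toPEquiv_mul, Matrix.mul_assoc, hQ, Matrix.mul_one]

theorem exp_smul_mul_diagonal_mul_transpose {U : Matrix n n ℂ} (hU : U * Uᵀ = 1) (z : ℂ)
    (d : n → ℂ) :
    NormedSpace.exp (z • (U * diagonal d * Uᵀ)) =
      U * diagonal (fun i => Complex.exp (z * d i)) * Uᵀ := by
  rw [← inv_eq_right_inv hU, ← smul_mul_assoc, ← mul_smul_comm, ← diagonal_smul,
    exp_conj _ _ (IsUnit.of_mul_eq_one _ hU), exp_diagonal]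
  simp [Pi.exp_def, ← Complex.exp_eq_exp_ℂ]

theorem exp_I_mul_pi_smul_conj_intCast_diagonal {Q : Matrix n n ℝ}
    (hQ : Q * Qᵀ = 1) (k : n → ℤ) :
    NormedSpace.exp ((Complex.I * Real.pi) •
        (Q * diagonal (fun i => (k i : ℝ)) * Qᵀ).map (fun x => (x : ℂ))) =
      (Q * diagonal (fun i => (-1) ^ k i) * Qᵀ).map (fun x => (x : ℂ)) := by
  let f := Complex.ofRealHom
  have hQf : Q.map f * (Q.map f)ᵀ = 1 := by
    rw [← transpose_map, ← Matrix.map_mul, hQ, Matrix.map_one _ (map_zero f) (map_one f)]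
  change NormedSpace.exp (_ • (Q * diagonal _ * Qᵀ).map f) = (Q * diagonal _ * Qᵀ).map f
  simp only [Matrix.map_mul, transpose_map, diagonal_map (map_zero f)]
  rw [exp_smul_mul_diagonal_mul_transpose hQf]
  simp [f, Complex.exp_I_mul_pi_mul_intCast]

end Matrix

noncomputable def pathFiveEigenvectors (b₁ b₂ c : ℝ) : Matrix (Fin 5) (Fin 5) ℝ :=
  !![b₁ / (2 * b₂), 1 / 2, c / b₂, 1 / 2, b₁ / (2 * b₂);
     -(1 / 2), -(1 / 2), 0, 1 / 2, 1 / 2;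
     c / b₂, 0, -(b₁ / b₂), 0, c / b₂;
     -(1 / 2), 1 / 2, 0, -(1 / 2), 1 / 2;
     b₁ / (2 * b₂), -(1 / 2), c / b₂, -(1 / 2), b₁ / (2 * b₂)]

namespace pathFiveEigenvectors

variable {b₁ b₂ c : ℝ}

theorem mul_transpose (hb₂ : b₂ ≠ 0) (hc : c ^ 2 = (b₂ ^ 2 - b₁ ^ 2) / 2) :
    pathFiveEigenvectors b₁ b₂ c * (pathFiveEigenvectors b₁ b₂ c)ᵀ = 1 := by
  ext i j
  simp only [mul_apply, transpose_apply, Fin.sum_univ_five]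
  fin_cases i <;> fin_cases j <;> simp [pathFiveEigenvectors, one_apply] <;> field_simp <;>
    linarith

theorem conj_diagonal (hb₂ : b₂ ≠ 0) :
    pathFiveEigenvectors b₁ b₂ c * diagonal ![-b₂, -b₁, 0, b₁, b₂] *
        (pathFiveEigenvectors b₁ b₂ c)ᵀ =
      !![0, b₁, 0, 0, 0; b₁, 0, c, 0, 0; 0, c, 0, c, 0; 0, 0, c, 0, b₁; 0, 0, 0, b₁, 0] := by
  ext i j
  simp only [mul_apply, transpose_apply, Fin.sum_univ_five]
  fin_cases i <;> fin_cases j <;> simp [pathFiveEigenvectors] <;> field_simp <;> ring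

theorem submatrix_rev :
    (pathFiveEigenvectors b₁ b₂ c).submatrix Fin.revPerm id =
      pathFiveEigenvectors b₁ b₂ c * diagonal ![1, -1, 1, -1, 1] := by
  ext i j
  fin_cases i <;> fin_cases j <;> simp [pathFiveEigenvectors]

end pathFiveEigenvectors

theorem neg_one_zpow_of_odd_of_even {β₁ β₂ : ℤ} (h₁ : Odd β₁) (h₂ : Even β₂) :
    (fun i => (-1 : ℝ) ^ (![-β₂, -β₁, 0, β₁, β₂] i)) = ![1, -1, 1, -1, 1] := by
  ext i
  fin_cases i <;> simp [h₁.neg_one_zpow, h₂.neg_one_zpow]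

theorem pst_path_five_general (β₁ β₂ : ℤ) (h₁ : Odd β₁) (h₂ : Even β₂) (h₁pos : 0 < β₁)
    (hlt : β₁ < β₂)
    (A : Matrix (Fin 5) (Fin 5) ℝ)
    (hA : A = !![0, (β₁ : ℝ), 0, 0, 0;
                 (β₁ : ℝ), 0, Real.sqrt (((β₂ : ℝ) ^ 2 - (β₁ : ℝ) ^ 2) / 2), 0, 0;
                 0, Real.sqrt (((β₂ : ℝ) ^ 2 - (β₁ : ℝ) ^ 2) / 2), 0,
                   Real.sqrt (((β₂ : ℝ) ^ 2 - (β₁ : ℝ) ^ 2) / 2), 0;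
                 0, 0, Real.sqrt (((β₂ : ℝ) ^ 2 - (β₁ : ℝ) ^ 2) / 2), 0, (β₁ : ℝ);
                 0, 0, 0, (β₁ : ℝ), 0]) :
    A.charpoly = (X + C (β₂ : ℝ)) * (X + C (β₁ : ℝ)) * X * (X - C (β₁ : ℝ)) *
        (X - C (β₂ : ℝ)) ∧
      transferAmp 5 A Real.pi 0 4 = 1 := by
  have hb₁ : (0 : ℝ) < β₁ := by exact_mod_cast h₁pos
  have hb₁₂ : (β₁ : ℝ) < β₂ := by exact_mod_cast hlt
  set c := Real.sqrt (((β₂ : ℝ) ^ 2 - (β₁ : ℝ) ^ 2) / 2)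
  have hb₂ : (β₂ : ℝ) ≠ 0 := (hb₁.trans hb₁₂).ne'
  have hc : c ^ 2 = ((β₂ : ℝ) ^ 2 - (β₁ : ℝ) ^ 2) / 2 := Real.sq_sqrt (by nlinarith)
  set Q := pathFiveEigenvectors β₁ β₂ c
  have hQ : Q * Qᵀ = 1 := pathFiveEigenvectors.mul_transpose hb₂ hc
  have hAQ : A = Q * diagonal (fun i => ((![-β₂, -β₁, 0, β₁, β₂] i : ℤ) : ℝ)) * Qᵀ := by
    have hD : (fun i => ((![-β₂, -β₁, 0, β₁, β₂] i : ℤ) : ℝ)) = ![-(β₂ : ℝ), -β₁, 0, β₁, β₂] := by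
      ext i
      fin_cases i <;> simp
    rw [hA, hD, pathFiveEigenvectors.conj_diagonal hb₂]
  constructor
  · rw [hAQ, charpoly_mul_mul_transpose hQ, charpoly_diagonal, Fin.prod_univ_five]
    simp [sub_eq_add_neg]
  · rw [transferAmp, hAQ, exp_I_mul_pi_smul_conj_intCast_diagonal hQ,
      neg_one_zpow_of_odd_of_even h₁ h₂,
      mul_diagonal_mul_transpose_eq_permMatrix hQ pathFiveEigenvectors.submatrix_rev]
    simp [PEquiv.toMatrix_apply]

/-- For an odd positive integer `β₁` and an even positive integer `β₂` with `β₁ < β₂`,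
the weighted path on 5 vertices with edge weights
`β₁, √((β₂² - β₁²)/2), √((β₂² - β₁²)/2), β₁` has eigenvalues `-β₂, -β₁, 0, β₁, β₂`
and admits PST from vertex 1 to vertex 5 at time `π`. -/
theorem pst_path_five (β₁ β₂ : ℤ) (h₁ : Odd β₁) (h₂ : Even β₂) (h₁pos : 0 < β₁)
    (h₂pos : 0 < β₂) (hlt : β₁ < β₂)
    (A : Matrix (Fin 5) (Fin 5) ℝ)
    (hA : A = !![0, (β₁ : ℝ), 0, 0, 0;
                 (β₁ : ℝ), 0, Real.sqrt (((β₂ : ℝ) ^ 2 - (β₁ : ℝ) ^ 2) / 2), 0, 0;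
                 0, Real.sqrt (((β₂ : ℝ) ^ 2 - (β₁ : ℝ) ^ 2) / 2), 0,
                   Real.sqrt (((β₂ : ℝ) ^ 2 - (β₁ : ℝ) ^ 2) / 2), 0;
                 0, 0, Real.sqrt (((β₂ : ℝ) ^ 2 - (β₁ : ℝ) ^ 2) / 2), 0, (β₁ : ℝ);
                 0, 0, 0, (β₁ : ℝ), 0]) :
    A.charpoly = (X + C (β₂ : ℝ)) * (X + C (β₁ : ℝ)) * X * (X - C (β₁ : ℝ)) *
        (X - C (β₂ : ℝ)) ∧
      transferAmp 5 A Real.pi 0 4 = 1 :=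
  pst_path_five_general β₁ β₂ h₁ h₂ h₁pos hlt A hA
end
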